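/- arXiv:2104.04878 — 5 statements merged into one kernel-verified Lean document; each statement's English description precedes it below -/
import Mathlib

section
/- Let A be a function holomorphic on a neighborhood of 0 in ℂ and let θ ∈ ℂ with θ ∉ {0, −1, −2, −3, …} (θ is neither zero nor a negative integer). Then there exist r > 0 and a holomorphic function w on the disk D(0,r) with w(0) = 0 and w'(0) ≠ 0 such that for every z ∈ D(0,r) ∖ {0} with w(z) ∈ ℂ ∖ (−∞,0], the function f(ζ) = w(ζ)^θ (principal branch of the complex power) satisfies z·f''(z) = ((θ−1) + z·A(z))·f'(z). -/
/-!
Let `h = exp B` with `B' = A`, so that `h' = h A` and `h 0 = 1`, and solve `θ g + z g' = θ h`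
near `0` by multiplying the Taylor coefficients of `h` by `θ / (θ + n)`: these multipliers are
defined because `θ ∉ {0, -1, -2, …}`, and bounded because they tend to `0`.
For `w = z g^(1/θ)` we get `w'/w = 1/z + g'/(θ g) = h/(z g)`, hence `(w^θ)' = θ w^θ h/(z g)` on any branch of the power.
The logarithmic derivative of this product is `θ h/(z g) + A - 1/z - g'/g = (θ - 1)/z + A`,
which is the equation. Finally `w'(0) = g(0)^(1/θ) = 1`.
-/

open Filter Topology
open scoped ENNReal

namespace FormalMultilinearSeries

variable {𝕜 : Type*} [NontriviallyNormedField 𝕜]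

theorem radius_le_radius_ofScalars_mul_coeff (p : FormalMultilinearSeries 𝕜 𝕜 𝕜) {c : ℕ → 𝕜}
    {M : ℝ} (hc : ∀ n, ‖c n‖ ≤ M) :
    p.radius ≤ (ofScalars 𝕜 fun n => c n * p.coeff n).radius := by
  refine ENNReal.le_of_forall_nnreal_lt fun r hr => ?_
  obtain ⟨C, -, hC⟩ := p.norm_mul_pow_le_of_lt_radius hr
  refine le_radius_of_bound _ (M * C) fun n => ?_
  rw [ofScalars_norm, norm_mul, mul_assoc, ← norm_apply_eq_norm_coef]
  exact mul_le_mul (hc n) (hC n) (by positivity) ((norm_nonneg _).trans (hc n))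

end FormalMultilinearSeries

namespace HasFPowerSeriesOnBall

open FormalMultilinearSeries

variable {𝕜 : Type*} [NontriviallyNormedField 𝕜] {f : 𝕜 → 𝕜}
  {p : FormalMultilinearSeries 𝕜 𝕜 𝕜} {R : ℝ≥0∞} {z : 𝕜}

theorem hasSum_coeff_mul_pow (hf : HasFPowerSeriesOnBall f p 0 R) (hz : z ∈ Metric.eball 0 R) :
    HasSum (fun n => p.coeff n * z ^ n) (f z) := by
  simpa [mul_comm] using hf.hasSum hz

theorem hasSum_natCast_mul_coeff_mul_pow [CompleteSpace 𝕜] (hf : HasFPowerSeriesOnBall f p 0 R)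
    (hz : z ∈ Metric.eball 0 R) :
    HasSum (fun n => n * p.coeff n * z ^ n) (z * deriv f z) := by
  have h := (hf.fderiv.hasSum hz).mapL (ContinuousLinearMap.apply 𝕜 𝕜 z)
  simp only [zero_add, ContinuousLinearMap.apply_apply, p.derivSeries_apply_diag,
    fderiv_eq_smul_deriv, smul_eq_mul] at h
  refine (hasSum_nat_add_iff' 1).mp ?_
  simpa [apply_eq_pow_smul_coeff, pow_succ, mul_comm, mul_left_comm] using h

end HasFPowerSeriesOnBall

section EulerOperator

variable {𝕜 : Type*} [RCLike 𝕜]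

theorem tendsto_div_add_natCast (θ : 𝕜) :
    Tendsto (fun n : ℕ => θ / (θ + n)) atTop (𝓝 0) := by
  have : Tendsto (fun n : ℕ => θ + n) atTop (Bornology.cobounded 𝕜) := by
    simpa [Function.comp_def, add_comm] using
      (tendsto_add_const_cobounded θ).comp tendsto_natCast_atTop_cobounded
  simpa [div_eq_mul_inv] using (tendsto_inv₀_cobounded.comp this).const_mul θ

open FormalMultilinearSeries in
theorem exists_analyticAt_const_mul_add_mul_deriv_eq {h : 𝕜 → 𝕜} (hh : AnalyticAt 𝕜 h 0)
    {θ : 𝕜} (hθ : ∀ k : ℕ, θ ≠ -(k : 𝕜)) :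
    ∃ g : 𝕜 → 𝕜, AnalyticAt 𝕜 g 0 ∧ ∀ᶠ z in 𝓝 0, θ * g z + z * deriv g z = θ * h z := by
  obtain ⟨p, R, hp⟩ := hh
  obtain ⟨M, hM⟩ := isBounded_iff_forall_norm_le.mp
    (Metric.isBounded_range_of_tendsto _ (tendsto_div_add_natCast θ))
  set q := ofScalars 𝕜 fun n => θ / (θ + n) * p.coeff n
  have hR : R ≤ q.radius :=
    hp.r_le.trans (p.radius_le_radius_ofScalars_mul_coeff fun n => hM _ ⟨n, rfl⟩)
  have hq : HasFPowerSeriesOnBall q.sum q 0 R :=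
    (q.hasFPowerSeriesOnBall (hp.r_pos.trans_le hR)).mono hp.r_pos hR
  refine ⟨q.sum, hq.analyticAt, ?_⟩
  filter_upwards [Metric.eball_mem_nhds 0 hp.r_pos] with z hz
  refine (((hq.hasSum_coeff_mul_pow hz).mul_left θ).add
    (hq.hasSum_natCast_mul_coeff_mul_pow hz)).unique ?_
  convert (hp.hasSum_coeff_mul_pow hz).mul_left θ using 2 with n
  have hθn : θ + n ≠ 0 := fun h => hθ n (eq_neg_of_add_eq_zero_left h)
  simp only [q, coeff_ofScalars]
  field_simp

end EulerOperator

section Complex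

open Complex

theorem exists_hasDerivAt_self_mul_of_differentiableOn_ball {A : ℂ → ℂ} {c : ℂ} {r : ℝ}
    (hA : DifferentiableOn ℂ A (Metric.ball c r)) :
    ∃ h : ℂ → ℂ, h c = 1 ∧ ∀ z ∈ Metric.ball c r, HasDerivAt h (h z * A z) z := by
  obtain ⟨B, hBc, hB⟩ := hA.isExactOn_ball.with_val_at c 0
  exact ⟨fun z => exp (B z), by simp [hBc], fun z hz => (hB z hz).cexp⟩

theorem HasDerivAt.cpow_const' {f : ℂ → ℂ} {f' z c : ℂ} (hf : HasDerivAt f f' z)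
    (hz : f z ∈ slitPlane) :
    HasDerivAt (fun x => f x ^ c) (c * f z ^ c * f' / f z) z := by
  convert hf.cpow_const (c := c) hz using 1
  rw [cpow_sub _ _ (slitPlane_ne_zero hz), cpow_one]
  ring

variable {A g h : ℂ → ℂ} {θ z g' : ℂ}

theorem hasDerivAt_mul_cpow_inv_cpow (hθ : θ ≠ 0) (hz : z ≠ 0) (hg : HasDerivAt g g' z)
    (heuler : θ * g z + z * g' = θ * h z) (hgz : g z ∈ slitPlane)
    (hwz : z * g z ^ θ⁻¹ ∈ slitPlane) :
    HasDerivAt (fun ζ => (ζ * g ζ ^ θ⁻¹) ^ θ) (θ * (z * g z ^ θ⁻¹) ^ θ * h z / (z * g z)) z := by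
  have hu := hg.cpow_const' (c := θ⁻¹) hgz
  convert ((hasDerivAt_id' z).fun_mul hu).cpow_const' (c := θ) hwz using 1
  have hg0 := slitPlane_ne_zero hgz
  have hu0 : g z ^ θ⁻¹ ≠ 0 := cpow_ne_zero_iff.mpr (Or.inl hg0)
  -- keep `field_simp` from rewriting the exponents
  generalize (z * g z ^ θ⁻¹) ^ θ = W
  generalize g z ^ θ⁻¹ = u at hu0 ⊢
  field_simp
  linear_combination -W * heuler

theorem mul_deriv_deriv_eq_of_hasDerivAt {f : ℂ → ℂ}
    (hf : ∀ᶠ ζ in 𝓝 z, HasDerivAt f (θ * f ζ * h ζ / (ζ * g ζ)) ζ)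
    (hh : HasDerivAt h (h z * A z) z) (hg : HasDerivAt g g' z)
    (heuler : θ * g z + z * g' = θ * h z) (hz : z ≠ 0) (hgz : g z ≠ 0) :
    z * deriv (deriv f) z = ((θ - 1) + z * A z) * deriv f z := by
  have hderiv : deriv f =ᶠ[𝓝 z] fun ζ => θ * f ζ * h ζ / (ζ * g ζ) :=
    hf.mono fun ζ hζ => hζ.deriv
  have hF := ((hf.self_of_nhds.const_mul θ).fun_mul hh).fun_div
    ((hasDerivAt_id' z).fun_mul hg) (mul_ne_zero hz hgz)
  rw [hderiv.deriv_eq, hderiv.eq_of_nhds, hF.deriv]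
  field_simp
  linear_combination -(θ * f z * h z) * heuler

theorem mul_deriv_deriv_mul_cpow_inv_cpow_eq {U : Set ℂ} (hU : IsOpen U) (hθ : θ ≠ 0)
    (hg : ∀ ζ ∈ U, DifferentiableAt ℂ g ζ ∧ θ * g ζ + ζ * deriv g ζ = θ * h ζ ∧ g ζ ∈ slitPlane)
    (hh : HasDerivAt h (h z * A z) z) (hz : z ∈ U) (hz0 : z ≠ 0)
    (hwz : z * g z ^ θ⁻¹ ∈ slitPlane) :
    z * deriv (deriv fun ζ => (ζ * g ζ ^ θ⁻¹) ^ θ) z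
      = ((θ - 1) + z * A z) * deriv (fun ζ => (ζ * g ζ ^ θ⁻¹) ^ θ) z := by
  obtain ⟨hg_z, heuler_z, hg_slit_z⟩ := hg z hz
  have hw_cont : ContinuousAt (fun ζ => ζ * g ζ ^ θ⁻¹) z :=
    (differentiableAt_id.mul (hg_z.hasDerivAt.cpow_const' hg_slit_z).differentiableAt).continuousAt
  refine mul_deriv_deriv_eq_of_hasDerivAt ?_ hh hg_z.hasDerivAt heuler_z hz0
    (slitPlane_ne_zero hg_slit_z)
  filter_upwards [hU.mem_nhds hz, eventually_ne_nhds hz0,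
    hw_cont.eventually_mem (isOpen_slitPlane.mem_nhds hwz)] with ζ hζ hζ0 hwζ
  obtain ⟨hg_ζ, heuler_ζ, hg_slit_ζ⟩ := hg ζ hζ
  exact hasDerivAt_mul_cpow_inv_cpow hθ hζ0 hg_ζ.hasDerivAt heuler_ζ hg_slit_ζ hwζ

end Complex

/-- Normal form for a Fuchsian singularity of an affine structure on a curve, generic case:
if `θ` is neither zero nor a negative integer, the singular affine structure encoded by the
ODE `z f'' = ((θ-1) + z A(z)) f'` has developing map `z ↦ z^θ` in a suitable coordinate `w`. -/
theorem fuchsian_affine_normal_form_generic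
    (A : ℂ → ℂ) (hA : AnalyticAt ℂ A 0)
    (θ : ℂ) (hθ : ∀ k : ℕ, θ ≠ -(k : ℂ)) :
    ∃ r > (0 : ℝ), ∃ w : ℂ → ℂ,
      DifferentiableOn ℂ w (Metric.ball (0 : ℂ) r) ∧ w 0 = 0 ∧ deriv w 0 ≠ 0 ∧
      ∀ z ∈ Metric.ball (0 : ℂ) r, z ≠ 0 → w z ∈ Complex.slitPlane →
        z * deriv (deriv fun ζ => w ζ ^ θ) z
          = ((θ - 1) + z * A z) * deriv (fun ζ => w ζ ^ θ) z := by
  have hθ0 : θ ≠ 0 := by simpa using hθ 0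
  obtain ⟨ρ, hρ, hAρ⟩ := hA.exists_ball_analyticOnNhd
  obtain ⟨h, h0, hh⟩ := exists_hasDerivAt_self_mul_of_differentiableOn_ball hAρ.differentiableOn
  have hh_an : AnalyticAt ℂ h 0 :=
    DifferentiableOn.analyticAt (fun z hz => (hh z hz).differentiableAt.differentiableWithinAt)
      (Metric.ball_mem_nhds 0 hρ)
  obtain ⟨g, hg_an, hg_euler⟩ := exists_analyticAt_const_mul_add_mul_deriv_eq hh_an hθ
  have hg0 : g 0 = 1 := by simpa [h0, hθ0] using hg_euler.self_of_nhds
  have hg_slit : ∀ᶠ z in 𝓝 0, g z ∈ Complex.slitPlane :=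
    hg_an.continuousAt.eventually_mem (Complex.isOpen_slitPlane.mem_nhds (by simp [hg0]))
  obtain ⟨r, hr, hball⟩ := Metric.eventually_nhds_iff_ball.mp
    (((hg_an.eventually_analyticAt.mono fun _ => AnalyticAt.differentiableAt).and
      (hg_euler.and hg_slit)).and (Metric.ball_mem_nhds 0 hρ))
  have hw : ∀ z ∈ Metric.ball 0 r, HasDerivAt (fun ζ => ζ * g ζ ^ θ⁻¹)
      (g z ^ θ⁻¹ + z * (θ⁻¹ * g z ^ θ⁻¹ * deriv g z / g z)) z := fun z hz => by
    obtain ⟨⟨hg_z, -, hg_slit_z⟩, -⟩ := hball z hz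
    simpa using (hasDerivAt_id' z).fun_mul (hg_z.hasDerivAt.cpow_const' hg_slit_z)
  exact ⟨r, hr, fun ζ => ζ * g ζ ^ θ⁻¹,
    fun z hz => (hw z hz).differentiableAt.differentiableWithinAt, by simp,
    by simp [(hw 0 (Metric.mem_ball_self hr)).deriv, hg0],
    fun z hz => mul_deriv_deriv_mul_cpow_inv_cpow_eq Metric.isOpen_ball hθ0
      (fun ζ hζ => (hball ζ hζ).1) (hh z (hball z hz).2) hz⟩
end

section
/- Let A be a function holomorphic on a neighborhood of 0 in ℂ. Then there exist r > 0 and a holomorphic function w on the disk D(0,r) with w(0) = 0 and w'(0) ≠ 0 such that for every z ∈ D(0,r) ∖ {0} with w(z) ∈ ℂ ∖ (−∞,0], the function f(ζ) = log(w(ζ)) (principal branch of the logarithm) satisfies z·f''(z) = (−1 + z·A(z))·f'(z). -/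
/-!
Let `B` be a primitive of `A` with `B 0 = 0`. A developing map `f` solves the equation as soon as
`f' = exp B / z`, because then `z f'' = (A - 1 / z) exp B = (-1 + z A) f'`. Writing
`exp B = 1 + z k` with `k` holomorphic (the slope of `exp B` at `0`) and taking a primitive `h`
of `k`, the coordinate `w = z exp h` has `w' = exp h · exp B`, so `(log w)' = w' / w = exp B / z`,
while `w' 0 = exp (h 0) ≠ 0`.
-/

open Filter Topology Complex Metric

theorem exists_hasDerivAt_mul_exp_eq_exp_mul {E : ℂ → ℂ} {r : ℝ}
    (hE : DifferentiableOn ℂ E (ball 0 r)) (hE0 : E 0 = 1) :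
    ∃ h : ℂ → ℂ, ∀ z ∈ ball (0 : ℂ) r,
      HasDerivAt (fun ζ => ζ * exp (h ζ)) (exp (h z) * E z) z := by
  have hk : DifferentiableOn ℂ (dslope E 0) (ball 0 r) := by
    rcases le_or_gt r 0 with hr | hr
    · simp [ball_eq_empty.mpr hr, differentiableOn_empty]
    · exact (differentiableOn_dslope (ball_mem_nhds 0 hr)).mpr hE
  obtain ⟨h, hh⟩ := hk.isExactOn_ball
  refine ⟨h, fun z hz => ?_⟩
  have hslope : z * dslope E 0 z = E z - 1 := by
    simpa [hE0] using sub_smul_dslope E 0 z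
  exact ((hasDerivAt_id' z).mul (hh z hz).cexp).congr_deriv
    (by linear_combination exp (h z) * hslope)

theorem deriv_log_eventuallyEq_div {w w' : ℂ → ℂ} {z : ℂ}
    (hw : ∀ᶠ ζ in 𝓝 z, HasDerivAt w (w' ζ) ζ) (hz : w z ∈ slitPlane) :
    deriv (fun ζ => log (w ζ)) =ᶠ[𝓝 z] fun ζ => w' ζ / w ζ := by
  have hslit : ∀ᶠ ζ in 𝓝 z, w ζ ∈ slitPlane :=
    hw.self_of_nhds.continuousAt.eventually_mem (isOpen_slitPlane.mem_nhds hz)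
  filter_upwards [hw, hslit] with ζ hζ hζslit
  exact (hζ.clog hζslit).deriv

theorem mul_deriv_deriv_eq_of_deriv_eventuallyEq_exp_div {f A B : ℂ → ℂ} {z : ℂ} (hz : z ≠ 0)
    (hB : HasDerivAt B (A z) z) (hf : deriv f =ᶠ[𝓝 z] fun ζ => exp (B ζ) / ζ) :
    z * deriv (deriv f) z = (-1 + z * A z) * deriv f z := by
  have hf' : HasDerivAt (fun ζ => exp (B ζ) / ζ)
      ((exp (B z) * A z * z - exp (B z) * 1) / z ^ 2) z :=
    hB.cexp.div (hasDerivAt_id z) hz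
  rw [hf.deriv_eq, hf'.deriv, hf.self_of_nhds]
  field_simp
  ring

/-- Normal form for a Fuchsian singularity of an affine structure on a curve with
normalized affine angle `θ = 0`: the singular affine structure encoded by the ODE
`z f'' = (-1 + z A(z)) f'` has developing map `z ↦ log z` in a suitable coordinate `w`. -/
theorem fuchsian_affine_normal_form_log
    (A : ℂ → ℂ) (hA : AnalyticAt ℂ A 0) :
    ∃ r > (0 : ℝ), ∃ w : ℂ → ℂ,
      DifferentiableOn ℂ w (Metric.ball (0 : ℂ) r) ∧ w 0 = 0 ∧ deriv w 0 ≠ 0 ∧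
      ∀ z ∈ Metric.ball (0 : ℂ) r, z ≠ 0 → w z ∈ Complex.slitPlane →
        z * deriv (deriv fun ζ => Complex.log (w ζ)) z
          = (-1 + z * A z) * deriv (fun ζ => Complex.log (w ζ)) z := by
  obtain ⟨r, hr, hAr⟩ := hA.exists_ball_analyticOnNhd
  obtain ⟨B, hB0, hB⟩ := hAr.differentiableOn.isExactOn_ball.with_val_at 0 0
  have hexpB : DifferentiableOn ℂ (fun z => exp (B z)) (ball 0 r) :=
    fun z hz => (hB z hz).cexp.differentiableAt.differentiableWithinAt
  obtain ⟨h, hw⟩ := exists_hasDerivAt_mul_exp_eq_exp_mul hexpB (by simp [hB0])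
  refine ⟨r, hr, fun ζ => ζ * exp (h ζ),
    fun z hz => (hw z hz).differentiableAt.differentiableWithinAt, by simp, ?_, ?_⟩
  · simp [(hw 0 (mem_ball_self hr)).deriv, hB0, exp_ne_zero]
  · intro z hz hz0 hslit
    have hw_near : ∀ᶠ ζ in 𝓝 z, HasDerivAt (fun ζ => ζ * exp (h ζ)) (exp (h ζ) * exp (B ζ)) ζ :=
      eventually_of_mem (isOpen_ball.mem_nhds hz) hw
    refine mul_deriv_deriv_eq_of_deriv_eventuallyEq_exp_div hz0 (hB z hz) ?_
    filter_upwards [deriv_log_eventuallyEq_div hw_near hslit, eventually_ne_nhds hz0]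
      with ζ hζ hζ0
    rw [hζ]
    field_simp [exp_ne_zero]
end

section
/- Let θ ∈ ℂ be a complex number that is not a strictly positive integer, and let T be a function holomorphic on a neighborhood of 0 in ℂ with T(0) = (1 − θ²)/2. Then there exists a function u holomorphic on a neighborhood of 0 in ℂ with u(0) = θ − 1 such that z·u'(z) = T(z) + u(z) + (1/2)·u(z)² for all z in that neighborhood. -/
/-!
Briot–Bouquet. Writing `T = ∑ tₙ zⁿ` and `u = ∑ aₙ zⁿ`, the equation `z u' = T + u + u²/2`
says `a₀ = θ - 1` (a root of `t₀ + a + a²/2` thanks to `T 0 = (1 - θ²)/2`) and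
`(n - θ) aₙ = tₙ + ½ ∑_{0<k<n} aₖ a_{n-k}` for `n ≥ 1`, which determines the `aₙ` because `n ≠ θ`.
Since `‖n - θ‖ ≥ c n` for some `c > 0`, induction gives `‖aₙ‖ ≤ c ρⁿ` for `ρ` large: the `n - 1`
quadratic terms are each at most `c² ρⁿ`, and the factor `c n` from the denominator absorbs them.
So `∑ aₙ zⁿ` converges near `0`, and the equation holds there coefficientwise.
-/

open Filter Topology Finset

noncomputable def riccatiCoeff (θ : ℂ) (t : ℕ → ℂ) : ℕ → ℂ
  | 0 => θ - 1
  | n + 1 => (t (n + 1) + (1 / 2) *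
      ∑ i : Fin n, riccatiCoeff θ t (i + 1) * riccatiCoeff θ t (n - i)) / ((n : ℂ) + 1 - θ)

section RiccatiCoeff

variable {θ : ℂ} {t : ℕ → ℂ}

lemma riccatiCoeff_zero : riccatiCoeff θ t 0 = θ - 1 := by
  rw [riccatiCoeff]

lemma sub_mul_riccatiCoeff_succ (hθ : ∀ k : ℕ, 1 ≤ k → θ ≠ k) (n : ℕ) :
    ((n : ℂ) + 1 - θ) * riccatiCoeff θ t (n + 1) =
      t (n + 1) + (1 / 2) * ∑ i ∈ range n, riccatiCoeff θ t (i + 1) * riccatiCoeff θ t (n - i) := by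
  have hne : (n : ℂ) + 1 - θ ≠ 0 :=
    sub_ne_zero.2 fun h => hθ (n + 1) (Nat.le_add_left 1 n) (by push_cast; exact h.symm)
  rw [riccatiCoeff, mul_div_cancel₀ _ hne,
    Fin.sum_univ_eq_sum_range (fun i => riccatiCoeff θ t (i + 1) * riccatiCoeff θ t (n - i))]

lemma natCast_mul_riccatiCoeff (hθ : ∀ k : ℕ, 1 ≤ k → θ ≠ k) (ht0 : t 0 = (1 - θ ^ 2) / 2)
    (n : ℕ) :
    n * riccatiCoeff θ t n = t n + riccatiCoeff θ t n +
      (1 / 2) * ∑ k ∈ range (n + 1), riccatiCoeff θ t k * riccatiCoeff θ t (n - k) := by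
  set a := riccatiCoeff θ t
  have ha0 : a 0 = θ - 1 := riccatiCoeff_zero
  rcases n with _ | m
  · simp only [CharP.cast_eq_zero, zero_mul, zero_add, range_one, sum_singleton, ha0, ht0]
    ring
  · have hsplit : ∑ k ∈ range (m + 2), a k * a (m + 1 - k) =
        a 0 * a (m + 1) + ∑ i ∈ range m, a (i + 1) * a (m - i) + a (m + 1) * a 0 := by
      rw [sum_range_succ', sum_range_succ]
      simp only [Nat.add_sub_add_right, Nat.sub_self, Nat.sub_zero]
      ring
    rw [hsplit, ha0]
    push_cast
    linear_combination sub_mul_riccatiCoeff_succ (t := t) hθ m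

end RiccatiCoeff

lemma exists_pos_mul_natCast_le_norm_sub {θ : ℂ} (hθ : ∀ k : ℕ, 1 ≤ k → θ ≠ k) :
    ∃ c : ℝ, 0 < c ∧ ∀ n : ℕ, c * n ≤ ‖(n : ℂ) - θ‖ := by
  obtain ⟨M, hM⟩ := (tendsto_natCast_div_add_atTop (-θ)).norm.bddAbove_range
  refine ⟨(max M 1)⁻¹, by positivity, fun n => ?_⟩
  rw [inv_mul_le_iff₀ (by positivity)]
  rcases n with _ | n
  · simp only [CharP.cast_eq_zero]
    positivity
  have hne : ((n + 1 : ℕ) : ℂ) - θ ≠ 0 :=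
    sub_ne_zero.2 fun h => hθ (n + 1) (Nat.le_add_left 1 n) h.symm
  have hn : ‖((n + 1 : ℕ) : ℂ) / ((n + 1 : ℕ) + -θ)‖ ≤ M := hM ⟨n + 1, rfl⟩
  rw [← sub_eq_add_neg, norm_div, div_le_iff₀ (norm_pos_iff.2 hne), Complex.norm_natCast] at hn
  exact hn.trans (mul_le_mul_of_nonneg_right (le_max_left _ _) (norm_nonneg _))

section RiccatiRecursion

variable {θ : ℂ} {a t : ℕ → ℂ}

lemma norm_le_of_riccati_recursion {c ρ : ℝ} (hc : 0 < c) (hρ : 0 ≤ ρ)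
    (hden : ∀ n : ℕ, c * n ≤ ‖(n : ℂ) - θ‖) (ht : ∀ n, ‖t (n + 1)‖ ≤ c ^ 2 * ρ ^ (n + 1))
    (hrec : ∀ n : ℕ, ((n : ℂ) + 1 - θ) * a (n + 1) =
      t (n + 1) + (1 / 2) * ∑ i ∈ range n, a (i + 1) * a (n - i)) (n : ℕ) :
    ‖a (n + 1)‖ ≤ c * ρ ^ (n + 1) := by
  induction n using Nat.strong_induction_on with
  | _ m IH =>
    have hsum : ‖∑ i ∈ range m, a (i + 1) * a (m - i)‖ ≤ m * (c ^ 2 * ρ ^ (m + 1)) := by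
      refine (norm_sum_le_of_le _ fun i hi => ?_).trans_eq
        (by rw [sum_const, card_range, nsmul_eq_mul])
      have hi := mem_range.1 hi
      have hmi : ‖a (m - i)‖ ≤ c * ρ ^ (m - i) := by
        obtain ⟨j, hj⟩ : ∃ j, m - i = j + 1 := ⟨m - i - 1, by omega⟩
        rw [hj]
        exact IH j (by omega)
      calc ‖a (i + 1) * a (m - i)‖ ≤ c * ρ ^ (i + 1) * (c * ρ ^ (m - i)) := by
            rw [norm_mul]
            gcongr
            exact IH i hi
        _ = c ^ 2 * ρ ^ (i + 1 + (m - i)) := by ring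
        _ = c ^ 2 * ρ ^ (m + 1) := by rw [show i + 1 + (m - i) = m + 1 by omega]
    have hbound : c * (m + 1) * ‖a (m + 1)‖ ≤ c * (m + 1) * (c * ρ ^ (m + 1)) := calc
      c * (m + 1) * ‖a (m + 1)‖ ≤ ‖((m : ℂ) + 1 - θ) * a (m + 1)‖ := by
        rw [norm_mul]
        gcongr
        exact_mod_cast hden (m + 1)
      _ ≤ c ^ 2 * ρ ^ (m + 1) + 1 / 2 * (m * (c ^ 2 * ρ ^ (m + 1))) := by
        rw [hrec]
        refine (norm_add_le _ _).trans (add_le_add (ht m) ?_)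
        rw [norm_mul]
        gcongr
        norm_num
      _ ≤ c * (m + 1) * (c * ρ ^ (m + 1)) := by
        have : 0 ≤ (m : ℝ) * (c ^ 2 * ρ ^ (m + 1)) := by positivity
        nlinarith
    exact le_of_mul_le_mul_left hbound (by positivity)

lemma exists_norm_le_geometric_of_riccati_recursion {C σ : ℝ}
    (hθ : ∀ k : ℕ, 1 ≤ k → θ ≠ k) (hσ : 0 < σ) (ht : ∀ n, ‖t n‖ ≤ C * σ ^ n)
    (hrec : ∀ n : ℕ, ((n : ℂ) + 1 - θ) * a (n + 1) =
      t (n + 1) + (1 / 2) * ∑ i ∈ range n, a (i + 1) * a (n - i)) :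
    ∃ K ρ : ℝ, 0 < ρ ∧ ∀ n, ‖a n‖ ≤ K * ρ ^ n := by
  obtain ⟨c, hc, hden⟩ := exists_pos_mul_natCast_le_norm_sub hθ
  set ρ := σ * max 1 (C / c ^ 2) with hρ_def
  have hρ : 0 < ρ := by positivity
  have ht' : ∀ n, ‖t (n + 1)‖ ≤ c ^ 2 * ρ ^ (n + 1) := fun n => calc
    ‖t (n + 1)‖ ≤ c ^ 2 * (C / c ^ 2) * σ ^ (n + 1) := by
      rw [mul_div_cancel₀ _ (by positivity)]; exact ht _
    _ ≤ c ^ 2 * max 1 (C / c ^ 2) ^ (n + 1) * σ ^ (n + 1) := by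
      gcongr
      exact (le_max_right _ _).trans (le_self_pow₀ (le_max_left _ _) n.succ_ne_zero)
    _ = c ^ 2 * ρ ^ (n + 1) := by rw [hρ_def, mul_pow]; ring
  refine ⟨max ‖a 0‖ c, ρ, hρ, fun n => ?_⟩
  rcases n with _ | n
  · simp
  · exact (norm_le_of_riccati_recursion hc hρ.le hden ht' hrec n).trans
      (by gcongr; exact le_max_right _ _)

end RiccatiRecursion

section PowerSeries

variable {b : ℕ → ℂ} {K ρ : ℝ}

lemma summable_norm_natCast_pow_mul_mul_pow (k : ℕ) (hρ : 0 < ρ) (hb : ∀ n, ‖b n‖ ≤ K * ρ ^ n)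
    {z : ℂ} (hz : ‖z‖ < ρ⁻¹) : Summable fun n : ℕ => ‖(n : ℂ) ^ k * (b n * z ^ n)‖ := by
  have hz : ρ * ‖z‖ < 1 := (mul_lt_mul_of_pos_left hz hρ).trans_eq (mul_inv_cancel₀ hρ.ne')
  have hgeom := summable_pow_mul_geometric_of_norm_lt_one k
    (by rwa [Real.norm_of_nonneg (by positivity)] : ‖ρ * ‖z‖‖ < 1)
  refine .of_nonneg_of_le (fun n => norm_nonneg _) (fun n => ?_) (hgeom.mul_left K)
  rw [norm_mul, norm_mul, norm_pow, norm_pow, Complex.norm_natCast]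
  calc (n : ℝ) ^ k * (‖b n‖ * ‖z‖ ^ n) ≤ n ^ k * (K * ρ ^ n * ‖z‖ ^ n) := by gcongr; exact hb n
    _ = K * (n ^ k * (ρ * ‖z‖) ^ n) := by ring

lemma hasDerivAt_tsum_mul_pow (hρ : 0 < ρ) (hb : ∀ n, ‖b n‖ ≤ K * ρ ^ n) {z : ℂ}
    (hz : ‖z‖ < ρ⁻¹) :
    HasDerivAt (fun w => ∑' n, b n * w ^ n) (∑' n, b n * (n * z ^ (n - 1))) z := by
  obtain ⟨s, hzs, hsρ⟩ := exists_between hz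
  have hs : 0 < s := (norm_nonneg z).trans_lt hzs
  have hρs : ρ * s < 1 := (mul_lt_mul_of_pos_left hsρ hρ).trans_eq (mul_inv_cancel₀ hρ.ne')
  have hK : 0 ≤ K := (norm_nonneg _).trans (by simpa using hb 0)
  have hbound : ∀ n, ∀ y ∈ Metric.ball (0 : ℂ) s,
      ‖b n * (n * y ^ (n - 1))‖ ≤ K / s * (n * (ρ * s) ^ n) := by
    intro n y hy
    rw [mem_ball_zero_iff] at hy
    rcases n with _ | n
    · simp
    rw [norm_mul, norm_mul, norm_pow, Complex.norm_natCast, Nat.add_sub_cancel]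
    calc ‖b (n + 1)‖ * ((n + 1 : ℕ) * ‖y‖ ^ n) ≤ K * ρ ^ (n + 1) * ((n + 1 : ℕ) * s ^ n) := by
          gcongr; exact hb _
      _ = K / s * ((n + 1 : ℕ) * (ρ * s) ^ (n + 1)) := by field_simp; ring
  have hsum : Summable fun n : ℕ => K / s * (n * (ρ * s) ^ n) := by
    simpa using (summable_pow_mul_geometric_of_norm_lt_one 1
      (by rwa [Real.norm_of_nonneg (by positivity)] : ‖ρ * s‖ < 1)).mul_left (K / s)
  have hz' : z ∈ Metric.ball (0 : ℂ) s := mem_ball_zero_iff.2 hzs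
  refine hasDerivAt_tsum_of_isPreconnected hsum Metric.isOpen_ball
    (convex_ball (0 : ℂ) s).isPreconnected (fun n y _ => (hasDerivAt_pow n y).const_mul (b n))
    hbound hz' ?_ hz'
  simpa using (summable_norm_natCast_pow_mul_mul_pow 0 hρ hb hz).of_norm

lemma hasSum_mul_deriv_tsum_mul_pow (hρ : 0 < ρ) (hb : ∀ n, ‖b n‖ ≤ K * ρ ^ n) {z : ℂ}
    (hz : ‖z‖ < ρ⁻¹) :
    HasSum (fun n => n * b n * z ^ n) (z * deriv (fun w => ∑' n, b n * w ^ n) z) := by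
  have hsum : Summable fun n : ℕ => n * b n * z ^ n := by
    simpa only [pow_one, mul_assoc] using
      (summable_norm_natCast_pow_mul_mul_pow 1 hρ hb hz).of_norm
  rw [(hasDerivAt_tsum_mul_pow hρ hb hz).deriv, ← tsum_mul_left]
  convert hsum.hasSum using 1
  refine tsum_congr fun n => ?_
  rcases n with _ | n
  · simp
  · rw [Nat.add_sub_cancel]; ring

lemma hasSum_sq_tsum_mul_pow {a : ℕ → ℂ} {z : ℂ} (ha : Summable fun n => ‖a n * z ^ n‖) :
    HasSum (fun n => (∑ k ∈ range (n + 1), a k * a (n - k)) * z ^ n) ((∑' n, a n * z ^ n) ^ 2) := by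
  have hterm : ∀ n, ∑ k ∈ range (n + 1), a k * z ^ k * (a (n - k) * z ^ (n - k)) =
      (∑ k ∈ range (n + 1), a k * a (n - k)) * z ^ n := fun n => by
    rw [sum_mul]
    refine sum_congr rfl fun k hk => ?_
    rw [← pow_sub_mul_pow z (Nat.lt_succ_iff.1 (mem_range.1 hk))]
    ring
  rw [sq, tsum_mul_tsum_eq_tsum_sum_range_of_summable_norm ha ha]
  simp_rw [hterm]
  exact ((summable_norm_sum_mul_range_of_summable_norm ha ha).of_norm.congr hterm).hasSum

end PowerSeries

/-- Every projective structure with a Fuchsian singularity of normalized projective angle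
`θ` contains a Fuchsian singular affine structure in its class (Briot–Bouquet): if `θ` is
not a strictly positive integer and `T` is holomorphic near `0` with `T 0 = (1 - θ²)/2`,
the Riccati equation `z u' = T + u + (1/2)u²` has a holomorphic solution with
`u 0 = θ - 1`. -/
theorem fuchsian_projective_to_affine
    (θ : ℂ) (hθ : ∀ k : ℕ, 1 ≤ k → θ ≠ (k : ℂ))
    (T : ℂ → ℂ) (hT : AnalyticAt ℂ T 0) (hT0 : T 0 = (1 - θ ^ 2) / 2) :
    ∃ u : ℂ → ℂ, AnalyticAt ℂ u 0 ∧ u 0 = θ - 1 ∧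
      ∀ᶠ z in 𝓝 (0 : ℂ), z * deriv u z = T z + u z + (1 / 2) * u z ^ 2 := by
  obtain ⟨p, hp⟩ := hT
  obtain ⟨C, σ, -, hσ, hpC⟩ := p.le_mul_pow_of_radius_pos hp.radius_pos
  set a := riccatiCoeff θ p.coeff
  obtain ⟨K, ρ, hρ, ha⟩ := exists_norm_le_geometric_of_riccati_recursion hθ hσ
    (fun n => p.norm_apply_eq_norm_coef.symm.trans_le (hpC n)) (sub_mul_riccatiCoeff_succ hθ)
  have hball : Metric.ball (0 : ℂ) ρ⁻¹ ∈ 𝓝 0 := Metric.ball_mem_nhds 0 (inv_pos.2 hρ)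
  refine ⟨fun w => ∑' n, a n * w ^ n, ?_, ?_, ?_⟩
  · refine DifferentiableOn.analyticAt (fun z hz => ?_) hball
    exact (hasDerivAt_tsum_mul_pow hρ ha (mem_ball_zero_iff.1 hz)).differentiableAt
      |>.differentiableWithinAt
  · show ∑' n, a n * 0 ^ n = θ - 1
    rw [tsum_eq_single 0 fun n hn => by simp [zero_pow hn], pow_zero, mul_one]
    exact riccatiCoeff_zero
  filter_upwards [hball, hasFPowerSeriesAt_iff.1 hp] with z hz hTz
  rw [mem_ball_zero_iff] at hz
  have hu := summable_norm_natCast_pow_mul_mul_pow 0 hρ ha hz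
  simp only [pow_zero, one_mul] at hu
  have hrhs := ((hTz.add hu.of_norm.hasSum).add ((hasSum_sq_tsum_mul_pow hu).mul_left (1 / 2)))
  rw [zero_add] at hrhs
  refine (hasSum_mul_deriv_tsum_mul_pow hρ ha hz).unique (hrhs.congr_fun fun n => ?_)
  simp only [smul_eq_mul]
  have ht0 : p.coeff 0 = (1 - θ ^ 2) / 2 := (hp.coeff_zero _).trans hT0
  linear_combination z ^ n * natCast_mul_riccatiCoeff hθ ht0 n
end

section
/- Let n ≥ 1, let Z : ℂⁿ → ℂⁿ and ρ : ℂⁿ → ℂ, and on E = ℂⁿ × ℂ × ℂ define the vector fields X(z,ζ,ξ) = (ζ·Z(z), ζ·ξ, (1/2)·ξ² − ρ(z)·ζ²), H(z,ζ,ξ) = (0, ζ, ξ), and Y(z,ζ,ξ) = (0, 0, 2). Let p = (z,ζ,ξ) ∈ E and assume Z and ρ are complex-differentiable at z. Then, with the Lie bracket of vector fields defined by [V,W](x) = DW(x)(V(x)) − DV(x)(W(x)), one has [Y,X](p) = 2·H(p), [H,X](p) = X(p), and [H,Y](p) = −Y(p). -/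
open Filter Topology

/-- The Lie bracket of two vector fields, `[V,W](x) = DW(x)(V(x)) - DV(x)(W(x))`. -/
noncomputable def lieBracket {E : Type*} [NormedAddCommGroup E] [NormedSpace ℂ E]
    (V W : E → E) (x : E) : E :=
  fderiv ℂ W x (V x) - fderiv ℂ V x (W x)

/-!
`H` is the fibrewise Euler field and `X` is fibrewise homogeneous, of degree 1 in its
horizontal component `ζZ` and of degree 2 in its vertical ones, so `DX(H) = (ζZ, 2ζξ, ξ² - 2ρζ²)`
while `DH(X)` only picks up the vertical part of `X`; the difference is `X`. The field
`Y = 2 ∂/∂ξ` is constant, so `[Y,X] = 2 ∂X/∂ξ = 2H` and `[H,Y] = -DH(Y) = -Y`.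
-/

variable {F : Type*} [NormedAddCommGroup F] [NormedSpace ℂ F]

noncomputable def geodesicField (Z : F → F) (ρ : F → ℂ) (p : F × ℂ × ℂ) :
    F × ℂ × ℂ :=
  (p.2.1 • Z p.1, p.2.1 * p.2.2, (1 / 2) * p.2.2 ^ 2 - ρ p.1 * p.2.1 ^ 2)

noncomputable def eulerField : (F × ℂ × ℂ) →L[ℂ] F × ℂ × ℂ :=
  (0 : (F × ℂ × ℂ) →L[ℂ] F).prod (ContinuousLinearMap.snd ℂ F (ℂ × ℂ))

section

variable {Z : F → F} {ρ : F → ℂ} {p : F × ℂ × ℂ}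

theorem fderiv_geodesicField_apply (hZ : DifferentiableAt ℂ Z p.1)
    (hρ : DifferentiableAt ℂ ρ p.1) (v : F × ℂ × ℂ) :
    fderiv ℂ (geodesicField Z ρ) p v =
      (p.2.1 • fderiv ℂ Z p.1 v.1 + v.2.1 • Z p.1,
        p.2.1 * v.2.2 + p.2.2 * v.2.1,
        p.2.2 * v.2.2 - (2 * ρ p.1 * p.2.1 * v.2.1 + p.2.1 ^ 2 * fderiv ℂ ρ p.1 v.1)) := by
  have hζ : HasFDerivAt (fun q : F × ℂ × ℂ => q.2.1) _ p :=
    hasFDerivAt_fst.comp p (hasFDerivAt_snd (𝕜 := ℂ))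
  have hξ : HasFDerivAt (fun q : F × ℂ × ℂ => q.2.2) _ p :=
    hasFDerivAt_snd.comp p (hasFDerivAt_snd (𝕜 := ℂ))
  have hZ' := hZ.hasFDerivAt.comp p hasFDerivAt_fst
  have hρ' := hρ.hasFDerivAt.comp p hasFDerivAt_fst
  have hX : HasFDerivAt (geodesicField Z ρ) _ p := (hζ.smul hZ').prodMk ((hζ.mul hξ).prodMk
    (((hξ.pow 2).const_mul (1 / 2 : ℂ)).sub (hρ'.mul (hζ.pow 2))))
  rw [hX.fderiv]
  simp only [Function.comp_apply, one_div, Nat.add_one_sub_one, pow_one, nsmul_eq_mul,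
    Nat.cast_ofNat, ContinuousLinearMap.prod_apply, ContinuousLinearMap.comp_apply,
    add_apply, sub_apply, smul_apply, ContinuousLinearMap.coe_fst',
    ContinuousLinearMap.coe_snd', ContinuousLinearMap.smulRight_apply, smul_eq_mul,
    Prod.mk.injEq, true_and]
  ring

theorem lieBracket_vertical_geodesicField (hZ : DifferentiableAt ℂ Z p.1)
    (hρ : DifferentiableAt ℂ ρ p.1) (c : ℂ) :
    lieBracket (fun _ => ((0 : F), (0 : ℂ), c)) (geodesicField Z ρ) p = c • eulerField p := by
  simp only [lieBracket, fderiv_geodesicField_apply hZ hρ, fderiv_fun_const, map_zero,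
    zero_apply, smul_zero, zero_smul, add_zero, mul_zero, sub_zero, eulerField,
    ContinuousLinearMap.prod_apply, ContinuousLinearMap.coe_snd', Prod.smul_mk]
  ext <;> simp [mul_comm]

theorem lieBracket_eulerField_geodesicField (hZ : DifferentiableAt ℂ Z p.1)
    (hρ : DifferentiableAt ℂ ρ p.1) :
    lieBracket eulerField (geodesicField Z ρ) p = geodesicField Z ρ p := by
  simp only [lieBracket, ContinuousLinearMap.fderiv, fderiv_geodesicField_apply hZ hρ,
    eulerField, ContinuousLinearMap.prod_apply, zero_apply, ContinuousLinearMap.coe_snd',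
    geodesicField, map_zero, smul_zero, zero_add, mul_zero, add_zero, Prod.mk_sub_mk, sub_zero,
    Prod.mk.injEq, true_and]
  constructor <;> ring

end

theorem lieBracket_eulerField_vertical (p : F × ℂ × ℂ) (c : ℂ) :
    lieBracket eulerField (fun _ => ((0 : F), (0 : ℂ), c)) p = -((0 : F), (0 : ℂ), c) := by
  simp [lieBracket, ContinuousLinearMap.fderiv, eulerField]

theorem geodesic_field_sl2_relations_general
    (n : ℕ)
    (Z : (Fin n → ℂ) → (Fin n → ℂ)) (ρ : (Fin n → ℂ) → ℂ)
    (X H Y : ((Fin n → ℂ) × ℂ × ℂ) → ((Fin n → ℂ) × ℂ × ℂ))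
    (hX : X = fun p => (p.2.1 • Z p.1, p.2.1 * p.2.2, (1 / 2) * p.2.2 ^ 2 - ρ p.1 * p.2.1 ^ 2))
    (hH : H = fun p => (0, p.2.1, p.2.2))
    (hY : Y = fun _ => (0, 0, 2))
    (p : (Fin n → ℂ) × ℂ × ℂ)
    (hZ : DifferentiableAt ℂ Z p.1) (hρ : DifferentiableAt ℂ ρ p.1) :
    lieBracket Y X p = (2 : ℂ) • H p ∧
    lieBracket H X p = X p ∧
    lieBracket H Y p = -Y p := by
  subst hX hH hY
  exact ⟨lieBracket_vertical_geodesicField hZ hρ 2, lieBracket_eulerField_geodesicField hZ hρ,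
    lieBracket_eulerField_vertical p 2⟩

/-- The `sl(2,ℂ)` relations for the geodesic vector field of a foliated projective
structure on the bundle of 1-jets: with `X = ζZ ⊕ ζξ ∂/∂ζ ⊕ ((1/2)ξ² - ρζ²) ∂/∂ξ`,
`H = ζ ∂/∂ζ ⊕ ξ ∂/∂ξ` and `Y = 2 ∂/∂ξ`, one has `[Y,X] = 2H`, `[H,X] = X`,
`[H,Y] = -Y`. -/
theorem geodesic_field_sl2_relations
    (n : ℕ) (hn : 1 ≤ n)
    (Z : (Fin n → ℂ) → (Fin n → ℂ)) (ρ : (Fin n → ℂ) → ℂ)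
    (X H Y : ((Fin n → ℂ) × ℂ × ℂ) → ((Fin n → ℂ) × ℂ × ℂ))
    (hX : X = fun p => (p.2.1 • Z p.1, p.2.1 * p.2.2, (1 / 2) * p.2.2 ^ 2 - ρ p.1 * p.2.1 ^ 2))
    (hH : H = fun p => (0, p.2.1, p.2.2))
    (hY : Y = fun _ => (0, 0, 2))
    (p : (Fin n → ℂ) × ℂ × ℂ)
    (hZ : DifferentiableAt ℂ Z p.1) (hρ : DifferentiableAt ℂ ρ p.1) :
    lieBracket Y X p = (2 : ℂ) • H p ∧
    lieBracket H X p = X p ∧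
    lieBracket H Y p = -Y p :=
  geodesic_field_sl2_relations_general n Z ρ X H Y hX hH hY p hZ hρ
end

section
/- Let n ≥ 1, let Z : ℂⁿ → ℂⁿ and ρ : ℂⁿ → ℂ, let U ⊆ ℂ be open, and let z : U → ℂⁿ and ζ, ξ : U → ℂ be complex-differentiable functions satisfying, for all t ∈ U: z'(t) = ζ(t)·Z(z(t)), ζ'(t) = ζ(t)·ξ(t), and ξ'(t) = (1/2)·ξ(t)² − ρ(z(t))·ζ(t)². Let a, b, c, d ∈ ℂ with ad − bc = 1, set φ(t) = (at+b)/(ct+d), and let V = {t ∈ ℂ : ct + d ≠ 0 and φ(t) ∈ U}. Then the functions z̃(t) = z(φ(t)), ζ̃(t) = (ct+d)⁻²·ζ(φ(t)), and ξ̃(t) = (ct+d)⁻²·ξ(φ(t)) − 2c/(ct+d) satisfy the same system on V: z̃'(t) = ζ̃(t)·Z(z̃(t)), ζ̃'(t) = ζ̃(t)·ξ̃(t), and ξ̃'(t) = (1/2)·ξ̃(t)² − ρ(z̃(t))·ζ̃(t)². -/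
/-!
Write `w = c t + d` and `φ t = (a t + b) / w`, so that `φ' = w⁻²` when `a d - b c = 1`.
The transformed coordinate `ζ̃ = w⁻² ζ ∘ φ` differentiates to `w⁻² (w⁻² ζ' ∘ φ - (2c/w) ζ ∘ φ)`,
and the shift `-2c/w` in `ξ̃` is exactly what absorbs the term `-(2c/w) ζ ∘ φ`; for the
Riccati equation of `ξ`, the cross term of `½ ξ̃²` cancels the `-(2c/w) ξ ∘ φ` produced by the
weight and its square term `2c²/w²` is the derivative of `-2c/w`.
-/

section Mobius

variable {𝕜 : Type*} [NontriviallyNormedField 𝕜] {a b c d t : 𝕜}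

theorem hasDerivAt_affine (c d t : 𝕜) : HasDerivAt (fun s => c * s + d) c t := by
  simpa using ((hasDerivAt_id t).const_mul c).add_const d

theorem hasDerivAt_mobius (had : a * d - b * c = 1) (ht : c * t + d ≠ 0) :
    HasDerivAt (fun s => (a * s + b) / (c * s + d)) ((c * t + d) ^ 2)⁻¹ t := by
  have h := (hasDerivAt_affine a b t).div (hasDerivAt_affine c d t) ht
  rwa [show a * (c * t + d) - (a * t + b) * c = 1 by linear_combination had, one_div] at h

theorem hasDerivAt_inv_sq_affine (ht : c * t + d ≠ 0) :
    HasDerivAt (fun s => ((c * s + d) ^ 2)⁻¹)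
      (-(2 * c / (c * t + d)) * ((c * t + d) ^ 2)⁻¹) t := by
  refine (((hasDerivAt_affine c d t).pow 2).inv (pow_ne_zero 2 ht)).congr_deriv ?_
  simp only [Pi.pow_apply]
  field_simp
  ring

variable {E : Type*} [NormedAddCommGroup E] [NormedSpace 𝕜 E]

theorem HasDerivAt.comp_mobius {f : 𝕜 → E} {f' : E}
    (hf : HasDerivAt f f' ((a * t + b) / (c * t + d)))
    (had : a * d - b * c = 1) (ht : c * t + d ≠ 0) :
    HasDerivAt (fun s => f ((a * s + b) / (c * s + d))) (((c * t + d) ^ 2)⁻¹ • f') t :=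
  hf.scomp t (hasDerivAt_mobius had ht)

theorem HasDerivAt.inv_sq_mul_comp_mobius {f : 𝕜 → 𝕜} {f' : 𝕜}
    (hf : HasDerivAt f f' ((a * t + b) / (c * t + d)))
    (had : a * d - b * c = 1) (ht : c * t + d ≠ 0) :
    HasDerivAt (fun s => ((c * s + d) ^ 2)⁻¹ * f ((a * s + b) / (c * s + d)))
      (((c * t + d) ^ 2)⁻¹ *
        (((c * t + d) ^ 2)⁻¹ * f' - 2 * c / (c * t + d) * f ((a * t + b) / (c * t + d)))) t := by
  refine ((hasDerivAt_inv_sq_affine ht).mul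
    (hf.comp t (hasDerivAt_mobius had ht))).congr_deriv ?_
  rw [Function.comp_apply]
  ring

theorem hasDerivAt_two_mul_div_affine (ht : c * t + d ≠ 0) :
    HasDerivAt (fun s => 2 * c / (c * s + d)) (-(2 * c * c) / (c * t + d) ^ 2) t := by
  refine ((hasDerivAt_const t (2 * c)).div (hasDerivAt_affine c d t) ht).congr_deriv ?_
  ring

end Mobius

theorem geodesic_flow_mobius_invariance_general
    (n : ℕ)
    (Z : (Fin n → ℂ) → (Fin n → ℂ)) (ρ : (Fin n → ℂ) → ℂ)
    (U : Set ℂ)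
    (z : ℂ → (Fin n → ℂ)) (ζ ξ : ℂ → ℂ)
    (hz : ∀ t ∈ U, HasDerivAt z (ζ t • Z (z t)) t)
    (hζ : ∀ t ∈ U, HasDerivAt ζ (ζ t * ξ t) t)
    (hξ : ∀ t ∈ U, HasDerivAt ξ ((1 / 2) * ξ t ^ 2 - ρ (z t) * ζ t ^ 2) t)
    (a b c d : ℂ) (had : a * d - b * c = 1)
    (φ : ℂ → ℂ) (hφ : φ = fun t => (a * t + b) / (c * t + d))
    (V : Set ℂ) (hV : V = {t : ℂ | c * t + d ≠ 0 ∧ φ t ∈ U})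
    (zt : ℂ → (Fin n → ℂ)) (ζt ξt : ℂ → ℂ)
    (hzt : zt = fun t => z (φ t))
    (hζt : ζt = fun t => ((c * t + d) ^ 2)⁻¹ * ζ (φ t))
    (hξt : ξt = fun t => ((c * t + d) ^ 2)⁻¹ * ξ (φ t) - 2 * c / (c * t + d)) :
    ∀ t ∈ V,
      HasDerivAt zt (ζt t • Z (zt t)) t ∧
      HasDerivAt ζt (ζt t * ξt t) t ∧
      HasDerivAt ξt ((1 / 2) * ξt t ^ 2 - ρ (zt t) * ζt t ^ 2) t := by
  subst hφ hV hzt hζt hξt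
  rintro t ⟨ht, hφt⟩
  refine ⟨?_, ?_, ?_⟩
  · simpa only [smul_smul] using (hz _ hφt).comp_mobius had ht
  · refine ((hζ _ hφt).inv_sq_mul_comp_mobius had ht).congr_deriv ?_
    ring
  · refine (((hξ _ hφt).inv_sq_mul_comp_mobius had ht).sub
      (hasDerivAt_two_mul_div_affine ht)).congr_deriv ?_
    field_simp
    ring

/-- Reparametrization invariance of the geodesic flow of a foliated projective structure
(integral form of the `sl(2,ℂ)` relations): precomposing a solution of the geodesic system
with a fractional linear transformation in `SL(2,ℂ)` and transforming the jet coordinates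
accordingly yields again a solution. -/
theorem geodesic_flow_mobius_invariance
    (n : ℕ) (hn : 1 ≤ n)
    (Z : (Fin n → ℂ) → (Fin n → ℂ)) (ρ : (Fin n → ℂ) → ℂ)
    (U : Set ℂ) (hU : IsOpen U)
    (z : ℂ → (Fin n → ℂ)) (ζ ξ : ℂ → ℂ)
    (hz : ∀ t ∈ U, HasDerivAt z (ζ t • Z (z t)) t)
    (hζ : ∀ t ∈ U, HasDerivAt ζ (ζ t * ξ t) t)
    (hξ : ∀ t ∈ U, HasDerivAt ξ ((1 / 2) * ξ t ^ 2 - ρ (z t) * ζ t ^ 2) t)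
    (a b c d : ℂ) (had : a * d - b * c = 1)
    (φ : ℂ → ℂ) (hφ : φ = fun t => (a * t + b) / (c * t + d))
    (V : Set ℂ) (hV : V = {t : ℂ | c * t + d ≠ 0 ∧ φ t ∈ U})
    (zt : ℂ → (Fin n → ℂ)) (ζt ξt : ℂ → ℂ)
    (hzt : zt = fun t => z (φ t))
    (hζt : ζt = fun t => ((c * t + d) ^ 2)⁻¹ * ζ (φ t))
    (hξt : ξt = fun t => ((c * t + d) ^ 2)⁻¹ * ξ (φ t) - 2 * c / (c * t + d)) :
    ∀ t ∈ V,
      HasDerivAt zt (ζt t • Z (zt t)) t ∧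
      HasDerivAt ζt (ζt t * ξt t) t ∧
      HasDerivAt ξt ((1 / 2) * ξt t ^ 2 - ρ (zt t) * ζt t ^ 2) t :=
  geodesic_flow_mobius_invariance_general n Z ρ U z ζ ξ hz hζ hξ a b c d had φ hφ V hV zt ζt ξt hzt
    hζt hξt
end
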